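/- arXiv:2509.09753 — 4 statements merged into one kernel-verified Lean document; each statement's English description precedes it below -/
import Mathlib

section
/- For all nonnegative integers n and m with m < n, the alternating sum ∑_{k=0}^{n} (-1)^k * C(n,k) * (n-k)^m equals 0. -/
/-! The sum is the `n`-th forward difference of `x ↦ x ^ m` at `0`, summed in reverse order, and
the `n`-th forward difference of a polynomial of degree less than `n` vanishes. -/

open Finset
open scoped fwdDiff

theorem fwdDiff_iter_eq_sum_shift_reflect {M G : Type*} [AddCommMonoid M] [AddCommGroup G]
    (h : M) (f : M → G) (n : ℕ) (y : M) :
    (Δ_[h])^[n] f y = ∑ k ∈ range (n + 1), ((-1 : ℤ) ^ k * n.choose k) • f (y + (n - k) • h) := by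
  rw [fwdDiff_iter_eq_sum_shift, ← sum_range_reflect]
  refine sum_congr rfl fun k hk => ?_
  have hkn : k ≤ n := Nat.lt_succ_iff.mp (mem_range.mp hk)
  rw [Nat.add_sub_cancel, Nat.sub_sub_self hkn, Nat.choose_symm hkn]

theorem stmt0 (n m : ℕ) (h : m < n) :
    ∑ k ∈ Finset.range (n + 1), (-1 : ℤ) ^ k * (n.choose k) * ((n - k : ℕ) : ℤ) ^ m = 0 := by
  have hΔ := congrFun (fwdDiff_iter_pow_eq_zero_of_lt (R := ℤ) h) 0
  rw [fwdDiff_iter_eq_sum_shift_reflect] at hΔ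
  simpa only [zero_add, nsmul_one, smul_eq_mul, Pi.zero_apply] using hΔ
end

section
/- For every nonnegative integer n, ∑_{k=0}^{n} (-1)^k * C(n,k) * (n-k)^{n+1} = n * (n+1)! / 2. -/
/-!
Write `D y = Δ^n (x ↦ x ^ (n + 1)) (y)`, so that the sum in question is `D 0` (after reflecting
`k ↦ n - k`). Since `Δ^(n + 1) x^(n + 1) = (n + 1)!` is constant, `D` is affine of slope `(n + 1)!`,
giving `D 0 = D (-n) + n (n + 1)!`. Reflecting the sample points `-n, …, 0` onto `0, …, n` shows
`D (-n) = (-1)^(2n + 1) D 0 = -D 0`, hence `2 D 0 = n (n + 1)!`.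
-/

open Nat Finset Function fwdDiff

theorem apply_add_nsmul_of_fwdDiff_eq_const {M G : Type*} [AddCommMonoid M] [AddCommGroup G]
    {h : M} {g : M → G} {c : G} (hg : ∀ x, Δ_[h] g x = c) (y : M) (n : ℕ) :
    g (y + n • h) = g y + n • c := by
  induction n with
  | zero => simp
  | succ n ih =>
    rw [succ_nsmul, succ_nsmul, ← add_assoc, ← add_assoc, ← ih, ← hg, fwdDiff, add_sub_cancel]

theorem fwdDiff_iter_comp_neg {M G : Type*} [AddCommGroup M] [AddCommGroup G]
    (h : M) (f : M → G) (n : ℕ) (y : M) :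
    Δ_[h] ^[n] (fun r ↦ f (-r)) (-(y + n • h)) = (-1 : ℤ) ^ n • Δ_[h] ^[n] f y := by
  rw [fwdDiff_iter_eq_sum_shift, fwdDiff_iter_eq_sum_shift, smul_sum, ← sum_range_reflect]
  refine sum_congr rfl fun k hk ↦ ?_
  have hk : k ≤ n := Nat.lt_succ_iff.mp (mem_range.mp hk)
  have hsign : (-1 : ℤ) ^ k = (-1) ^ n * (-1) ^ (n - k) := by
    obtain ⟨j, rfl⟩ := Nat.exists_eq_add_of_le hk
    rw [Nat.add_sub_cancel_left, pow_add, mul_assoc, ← pow_add, ← two_mul, pow_mul, neg_one_sq,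
      one_pow, mul_one]
  have harg : -(-(y + n • h) + (n - k) • h) = y + k • h := by
    rw [← Nat.sub_add_cancel hk, add_nsmul, Nat.add_sub_cancel]; abel
  rw [Nat.add_sub_cancel, Nat.sub_sub_self hk, Nat.choose_symm hk, smul_smul, harg, hsign,
    mul_assoc]

section CommRing

variable {R : Type*} [CommRing R]

theorem fwdDiff_iter_pow_apply_zero (n m : ℕ) :
    Δ_[1] ^[n] (fun r : R ↦ r ^ m) 0 =
      ∑ k ∈ range (n + 1), (-1 : R) ^ k * n.choose k * ((n - k : ℕ) : R) ^ m := by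
  rw [fwdDiff_iter_eq_sum_shift, ← sum_range_reflect]
  refine sum_congr rfl fun k hk ↦ ?_
  have hk : k ≤ n := Nat.lt_succ_iff.mp (mem_range.mp hk)
  rw [Nat.add_sub_cancel, Nat.sub_sub_self hk, Nat.choose_symm hk]
  simp [zsmul_eq_mul]

theorem fwdDiff_iter_pow_apply_neg (n m : ℕ) :
    Δ_[1] ^[n] (fun r : R ↦ r ^ m) (-n) = (-1) ^ (n + m) * Δ_[1] ^[n] (fun r : R ↦ r ^ m) 0 := by
  have h := fwdDiff_iter_comp_neg 1 (fun r : R ↦ r ^ m) n 0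
  have hneg : (fun r : R ↦ (-r) ^ m) = (-1 : R) ^ m • fun r ↦ r ^ m := by
    ext r; simp [neg_pow r m]
  rw [hneg, fwdDiff_iter_const_smul, zero_add, nsmul_one] at h
  simp only [Pi.smul_apply, smul_eq_mul, zsmul_eq_mul, Int.cast_pow, Int.cast_neg,
    Int.cast_one] at h
  have hsq : (-1 : R) ^ m * (-1) ^ m = 1 := by rw [← mul_pow, neg_one_mul, neg_neg, one_pow]
  rw [pow_add, mul_comm ((-1 : R) ^ n), mul_assoc, ← h, ← mul_assoc, hsq, one_mul]

theorem fwdDiff_iter_pow_succ_apply_add (n : ℕ) (y : R) :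
    Δ_[1] ^[n] (fun r : R ↦ r ^ (n + 1)) (y + n) =
      Δ_[1] ^[n] (fun r : R ↦ r ^ (n + 1)) y + n * (n + 1)! := by
  have hslope (x : R) : Δ_[1] (Δ_[1] ^[n] fun r : R ↦ r ^ (n + 1)) x = ((n + 1)! : R) := by
    rw [← iterate_succ_apply' (fwdDiff 1), fwdDiff_iter_eq_factorial, Pi.natCast_apply]
  simpa [nsmul_eq_mul] using apply_add_nsmul_of_fwdDiff_eq_const hslope y n

end CommRing

theorem stmt2 (n : ℕ) :
    2 * ∑ k ∈ Finset.range (n + 1), (-1 : ℤ) ^ k * (n.choose k) * ((n - k : ℕ) : ℤ) ^ (n + 1)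
      = (n : ℤ) * ((n + 1)! : ℤ) := by
  have hzero := fwdDiff_iter_pow_apply_zero (R := ℤ) n (n + 1)
  have hslope := fwdDiff_iter_pow_succ_apply_add n (-n : ℤ)
  rw [neg_add_cancel, fwdDiff_iter_pow_apply_neg, Odd.neg_one_pow ⟨n, by ring⟩] at hslope
  linear_combination hslope - 2 * hzero
end

section
/- For every nonnegative integer n, ∑_{k=0}^{n} (-1)^k * C(n,k) * k^n = (-1)^n * n!. -/
/-! Up to the sign `(-1) ^ n`, the sum is the `n`-th forward difference of `x ↦ x ^ n` at `0`,
and that forward difference is the constant `n !`. -/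

open Nat Finset

theorem neg_one_pow_mul_neg_one_pow_sub {R : Type*} [Monoid R] [HasDistribNeg R] {k n : ℕ}
    (h : k ≤ n) : (-1 : R) ^ n * (-1) ^ (n - k) = (-1) ^ k := by
  obtain ⟨j, rfl⟩ := Nat.exists_eq_add_of_le h
  rw [Nat.add_sub_cancel_left, pow_add, mul_assoc, ← pow_add, ← two_mul, pow_mul, neg_one_sq,
    one_pow, mul_one]

theorem sum_range_neg_one_pow_mul_choose_mul_pow_self {R : Type*} [CommRing R] (n : ℕ) :
    ∑ k ∈ range (n + 1), (-1 : R) ^ k * n.choose k * (k : R) ^ n = (-1) ^ n * n ! := by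
  have h := congr_fun (fwdDiff_iter_eq_factorial (R := R) (n := n)) 0
  rw [fwdDiff_iter_eq_sum_shift, Pi.natCast_apply] at h
  rw [← h, mul_sum]
  refine sum_congr rfl fun k hk => ?_
  push_cast [zero_add, nsmul_one, zsmul_eq_mul, ← mul_assoc]
  rw [neg_one_pow_mul_neg_one_pow_sub (Nat.lt_succ_iff.mp (mem_range.mp hk))]

theorem stmt5 (n : ℕ) :
    ∑ k ∈ Finset.range (n + 1), (-1 : ℤ) ^ k * (n.choose k) * (k : ℤ) ^ n
      = (-1) ^ n * (n ! : ℤ) :=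
  sum_range_neg_one_pow_mul_choose_mul_pow_self n
end

section
/- For every nonnegative integer n, the (n+1)-st derivative of the function x ↦ (e^x - 1)^n at x = 0 equals n*(n+1)!/2. -/
/-!
Write `gₙ(x) = (eˣ - 1)ⁿ`. Since `eˣ = g₁(x) + 1`, we get `g'ₖ₊₁ = (k + 1) gₖ eˣ = (k + 1) (gₖ₊₁ + gₖ)`,
so the numbers `gₙ⁽ᵐ⁾(0) / n!` obey the recurrence and initial values of the Stirling numbers of
the second kind: `gₙ⁽ᵐ⁾(0) = n! S(m, n)`. The theorem is the case `m = n + 1`, where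
`S(n + 1, n) = (n + 1).choose 2`.
-/

open Nat

theorem hasDerivAt_exp_sub_one_pow (k : ℕ) (x : ℝ) :
    HasDerivAt (fun x => (Real.exp x - 1) ^ (k + 1))
      ((k + 1) * ((Real.exp x - 1) ^ (k + 1) + (Real.exp x - 1) ^ k)) x :=
  ((Real.hasDerivAt_exp x).sub_const 1).fun_pow (k + 1) |>.congr_deriv <| by
    push_cast [Nat.add_sub_cancel]
    ring

theorem deriv_exp_sub_one_pow (k : ℕ) :
    deriv (fun x : ℝ => (Real.exp x - 1) ^ (k + 1)) =
      fun x => (k + 1) * ((Real.exp x - 1) ^ (k + 1) + (Real.exp x - 1) ^ k) :=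
  funext fun x => (hasDerivAt_exp_sub_one_pow k x).deriv

theorem iteratedDeriv_exp_sub_one_pow_zero (m n : ℕ) :
    iteratedDeriv m (fun x : ℝ => (Real.exp x - 1) ^ n) 0 = n ! * stirlingSecond m n := by
  induction m generalizing n with
  | zero => cases n <;> simp
  | succ m ih =>
    cases n with
    | zero => simp [iteratedDeriv_const]
    | succ k =>
      have hsmooth (j : ℕ) : ContDiffAt ℝ m (fun x : ℝ => (Real.exp x - 1) ^ j) 0 :=
        ((Real.contDiff_exp.sub contDiff_const).pow j).contDiffAt
      rw [iteratedDeriv_succ', deriv_exp_sub_one_pow, iteratedDeriv_const_mul_field,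
        iteratedDeriv_fun_add (hsmooth _) (hsmooth _), ih, ih, stirlingSecond_succ_succ,
        factorial_succ]
      push_cast
      ring

theorem stmt14 (n : ℕ) :
    iteratedDeriv (n + 1) (fun x : ℝ => (Real.exp x - 1) ^ n) 0
      = (n : ℝ) * ((n + 1)! : ℝ) / 2 := by
  rw [iteratedDeriv_exp_sub_one_pow_zero, stirlingSecond_succ_self_left, Nat.cast_choose_two,
    factorial_succ]
  push_cast
  ring
end
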